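/- Let N ≥ 1, ℓ > -1, ξ : [0,∞) → ℝ be C² with ξ'(0)=0, and g nonincreasing with Δξ(r) ≥ r^ℓ g(r) for all r > 0, where Δξ = ξ'' + (N-1)ξ'/r. Then ξ(r) ≥ ξ(0) + r^{ℓ+2} g(r) / ((N+ℓ)(ℓ+2)) for all r ≥ 0. -/

import Mathlib

/-!
Since `(r^{N-1} ξ')' = r^{N-1} Δξ`, the bound `Δξ(s) ≥ s^ℓ a` on `(0, r)` can be compared with
`(s^{N+ℓ} a / (N+ℓ))' = s^{N-1} s^ℓ a`, which gives `ξ'(r) ≥ r^{ℓ+1} a / (N+ℓ)`; with `a = g(r)`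
this yields `ξ'(r) ≥ r^{ℓ+1} g(r) / (N+ℓ)` for every `r > 0`. As `g` is nonincreasing,
`ξ'(s) ≥ s^{ℓ+1} g(r) / (N+ℓ)` for `s ≤ r`, and integrating once more gives the claim.
-/

open Real

/-- The radial Laplacian on `ℝ^N`: `Δξ(r) = ξ''(r) + (N-1) ξ'(r) / r`. -/
noncomputable def radLap (N : ℕ) (ξ : ℝ → ℝ) (r : ℝ) : ℝ :=
  deriv (deriv ξ) r + ((N : ℝ) - 1) / r * deriv ξ r

open Set

lemma sub_le_sub_of_hasDerivAt_le {f φ f' φ' : ℝ → ℝ} {a b : ℝ} (hab : a ≤ b)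
    (hf : ContinuousOn f (Icc a b)) (hφ : ContinuousOn φ (Icc a b))
    (hf' : ∀ x ∈ Ioo a b, HasDerivAt f (f' x) x) (hφ' : ∀ x ∈ Ioo a b, HasDerivAt φ (φ' x) x)
    (hle : ∀ x ∈ Ioo a b, φ' x ≤ f' x) : φ b - φ a ≤ f b - f a := by
  have hmono : MonotoneOn (f - φ) (Icc a b) := by
    refine monotoneOn_of_hasDerivWithinAt_nonneg (f' := f' - φ') (convex_Icc a b) (hf.sub hφ)
      ?_ ?_ <;> rw [interior_Icc]
    · exact fun x hx ↦ ((hf' x hx).sub (hφ' x hx)).hasDerivWithinAt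
    · exact fun x hx ↦ sub_nonneg.2 (hle x hx)
  have := hmono (left_mem_Icc.2 hab) (right_mem_Icc.2 hab) hab
  simp only [Pi.sub_apply] at this
  linarith

lemma rpow_mul_div_le_of_radial_ge {N l a r : ℝ} {F : ℝ → ℝ} (hN : 1 ≤ N) (hNl : 0 < N + l)
    (hr : 0 < r) (hF : ContinuousOn F (Icc 0 r)) (hF0 : F 0 = 0)
    (hFd : ∀ s ∈ Ioo 0 r, DifferentiableAt ℝ F s)
    (h : ∀ s ∈ Ioo 0 r, s ^ l * a ≤ deriv F s + (N - 1) / s * F s) :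
    r ^ (l + 1) * a / (N + l) ≤ F r := by
  have key := sub_le_sub_of_hasDerivAt_le hr.le
    (f := fun s ↦ s ^ (N - 1) * F s) (φ := fun s ↦ s ^ (N + l) * a / (N + l))
    ((continuousOn_id.rpow_const fun _ _ ↦ Or.inr (by linarith)).mul hF)
    (((continuousOn_id.rpow_const fun _ _ ↦ Or.inr hNl.le).mul_const a).div_const _)
    (fun s hs ↦ (hasDerivAt_rpow_const (Or.inl hs.1.ne')).mul (hFd s hs).hasDerivAt)
    (fun s hs ↦ ((hasDerivAt_rpow_const (Or.inl hs.1.ne')).mul_const a).div_const _)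
    (fun s hs ↦ by
      have hs0 := hs.1
      have hφ' : (N + l) * s ^ (N + l - 1) * a / (N + l) = s ^ (N - 1) * (s ^ l * a) := by
        rw [show N + l - 1 = (N - 1) + l by ring, rpow_add hs0]
        field_simp
      have hf' : (N - 1) * s ^ (N - 1 - 1) * F s + s ^ (N - 1) * deriv F s
          = s ^ (N - 1) * (deriv F s + (N - 1) / s * F s) := by
        rw [rpow_sub_one hs0.ne']
        field_simp
        ring
      rw [hφ', hf']
      exact mul_le_mul_of_nonneg_left (h s hs) (rpow_nonneg hs0.le _))
  simp only [zero_rpow hNl.ne', hF0, mul_zero, zero_mul, zero_div, sub_zero] at key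
  rw [show r ^ (N + l) = r ^ (N - 1) * r ^ (l + 1) by rw [← rpow_add hr]; ring_nf] at key
  have hpos : 0 < r ^ (N - 1) := rpow_pos_of_pos hr _
  refine le_of_mul_le_mul_left ?_ hpos
  calc r ^ (N - 1) * (r ^ (l + 1) * a / (N + l)) = r ^ (N - 1) * r ^ (l + 1) * a / (N + l) := by
        ring
    _ ≤ r ^ (N - 1) * F r := key

theorem stmt5 (N : ℕ) (hN : 1 ≤ N) (l : ℝ) (hl : -1 < l) (ξ g : ℝ → ℝ)
    (hξ : ContDiff ℝ 2 ξ) (hξ0 : deriv ξ 0 = 0)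
    (hg : AntitoneOn g (Set.Ici 0))
    (h : ∀ r > (0 : ℝ), radLap N ξ r ≥ r ^ l * g r) :
    ∀ r ≥ (0 : ℝ), ξ r ≥ ξ 0 + r ^ (l + 2) * g r / (((N : ℝ) + l) * (l + 2)) := by
  have hN' : (1 : ℝ) ≤ N := by exact_mod_cast hN
  have hNl : 0 < (N : ℝ) + l := by linarith
  have hl2 : l + 2 ≠ 0 := by linarith
  have deriv_ge : ∀ s > 0, s ^ (l + 1) * g s / (N + l) ≤ deriv ξ s := by
    intro s hs
    refine rpow_mul_div_le_of_radial_ge hN' hNl hs (hξ.continuous_deriv one_le_two).continuousOn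
      hξ0 (fun t _ ↦ hξ.differentiable_deriv_two t) fun t ht ↦ ?_
    calc t ^ l * g s ≤ t ^ l * g t :=
          mul_le_mul_of_nonneg_left (hg ht.1.le hs.le ht.2.le) (rpow_nonneg ht.1.le _)
      _ ≤ radLap N ξ t := h t ht.1
  intro r hr
  rcases hr.eq_or_lt with rfl | hr
  · simp [zero_rpow hl2]
  have key := sub_le_sub_of_hasDerivAt_le hr.le (f := ξ)
    (φ := fun s ↦ s ^ (l + 2) * g r / ((N + l) * (l + 2)))
    hξ.continuous.continuousOn
    (((continuousOn_id.rpow_const fun _ _ ↦ Or.inr (by linarith)).mul_const _).div_const _)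
    (fun s _ ↦ (hξ.differentiable two_ne_zero s).hasDerivAt)
    (fun s hs ↦ (((hasDerivAt_rpow_const (Or.inl hs.1.ne')).mul_const (g r)).div_const _))
    (fun s hs ↦ by
      calc (l + 2) * s ^ (l + 2 - 1) * g r / ((N + l) * (l + 2))
          = s ^ (l + 1) * g r / (N + l) := by
            rw [show l + 2 - 1 = l + 1 by ring]
            field_simp
        _ ≤ s ^ (l + 1) * g s / (N + l) := by
            gcongr
            · exact rpow_nonneg hs.1.le _
            · exact hg hs.1.le hr.le hs.2.le
        _ ≤ deriv ξ s := deriv_ge s hs.1)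
  simp only [zero_rpow hl2, zero_mul, zero_div, sub_zero] at key
  linarith
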